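/- Fusion relation for the chiral monodromy (eq. (3.1)): Assume v ∈ A is an invertible central element satisfying the ribbon relation τ(R) · R = (v ⊗ v) · Δ(v)⁻¹. Set M := (v⁻¹ ⊗ 1) · R · τ(R) ∈ A ⊗ A. Then in A ⊗ A ⊗ A one has M₂₃ · R₁₂ · M₁₃ = τ(R)₁₂⁻¹ · (Δ ⊗ id)(M). (In the paper's notation: M² R₊ M¹ = R₋ Δ_a(M), with M = v_a⁻¹ N.) -/

import Mathlib

open scoped TensorProduct

noncomputable section

namespace Stmt9

variable (A : Type*) [Ring A] [Bialgebra ℂ A]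

/-- Embedding of `A ⊗ A` into `A ⊗ A ⊗ A` with legs in positions 1 and 2. -/
def a12 : A ⊗[ℂ] A →ₐ[ℂ] A ⊗[ℂ] (A ⊗[ℂ] A) :=
  Algebra.TensorProduct.map (AlgHom.id ℂ A) Algebra.TensorProduct.includeLeft

/-- Embedding of `A ⊗ A` into `A ⊗ A ⊗ A` with legs in positions 1 and 3. -/
def a13 : A ⊗[ℂ] A →ₐ[ℂ] A ⊗[ℂ] (A ⊗[ℂ] A) :=
  Algebra.TensorProduct.map (AlgHom.id ℂ A) Algebra.TensorProduct.includeRight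

/-- Embedding of `A ⊗ A` into `A ⊗ A ⊗ A` with legs in positions 2 and 3. -/
def a23 : A ⊗[ℂ] A →ₐ[ℂ] A ⊗[ℂ] (A ⊗[ℂ] A) :=
  Algebra.TensorProduct.includeRight

/-- `Δ ⊗ id_A : A ⊗ A → A ⊗ A ⊗ A`. -/
def deltaIdA : A ⊗[ℂ] A →ₐ[ℂ] A ⊗[ℂ] (A ⊗[ℂ] A) :=
  (Algebra.TensorProduct.assoc ℂ ℂ ℂ A A A).toAlgHom.comp
    (Algebra.TensorProduct.map (Bialgebra.comulAlgHom ℂ A) (AlgHom.id ℂ A))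

/-- `id_A ⊗ Δ : A ⊗ A → A ⊗ A ⊗ A`. -/
def idDeltaA : A ⊗[ℂ] A →ₐ[ℂ] A ⊗[ℂ] (A ⊗[ℂ] A) :=
  Algebra.TensorProduct.map (AlgHom.id ℂ A) (Bialgebra.comulAlgHom ℂ A)

/-- Map units along a `ℂ`-algebra homomorphism. -/
def uMap {X Y : Type*} [Semiring X] [Semiring Y] [Algebra ℂ X] [Algebra ℂ Y] (f : X →ₐ[ℂ] Y) :
    Xˣ →* Yˣ :=
  Units.map (f : X →* Y)

section Aux

variable {A}

/-- An element `c ⊗ 1` with `c` central is central in a tensor product. -/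
lemma cen_left {B : Type*} [Ring B] [Algebra ℂ B] {c : A} (hc : ∀ a : A, c * a = a * c)
    (z : A ⊗[ℂ] B) : (c ⊗ₜ[ℂ] (1 : B)) * z = z * (c ⊗ₜ[ℂ] (1 : B)) := by
  induction z using TensorProduct.induction_on with
  | zero => simp
  | tmul x y => simp [Algebra.TensorProduct.tmul_mul_tmul, hc]
  | add x y hx hy => rw [mul_add, add_mul, hx, hy]

/-- An element `1 ⊗ c` with `c` central is central in a tensor product. -/
lemma cen_right {B : Type*} [Ring B] [Algebra ℂ B] {c : B} (hc : ∀ b : B, c * b = b * c)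
    (z : A ⊗[ℂ] B) : ((1 : A) ⊗ₜ[ℂ] c) * z = z * ((1 : A) ⊗ₜ[ℂ] c) := by
  induction z using TensorProduct.induction_on with
  | zero => simp
  | tmul x y => simp [Algebra.TensorProduct.tmul_mul_tmul, hc]
  | add x y hx hy => rw [mul_add, add_mul, hx, hy]

/-- If `N` commutes with the image of `g`, then `1 ⊗ N` commutes with the image of `id ⊗ g`. -/
lemma mono_comm (N : A ⊗[ℂ] A) (g : A →ₐ[ℂ] A ⊗[ℂ] A)
    (hN : ∀ a : A, N * g a = g a * N) (z : A ⊗[ℂ] A) :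
    ((1 : A) ⊗ₜ[ℂ] N) * (Algebra.TensorProduct.map (AlgHom.id ℂ A) g) z
      = (Algebra.TensorProduct.map (AlgHom.id ℂ A) g) z * ((1 : A) ⊗ₜ[ℂ] N) := by
  induction z using TensorProduct.induction_on with
  | zero => simp
  | tmul x y => simp [Algebra.TensorProduct.tmul_mul_tmul, hN]
  | add x y hx hy => rw [map_add, mul_add, add_mul, hx, hy]

end Aux

lemma a12_eq (z : A ⊗[ℂ] A) :
    a12 A z = Algebra.TensorProduct.assoc ℂ ℂ ℂ A A A (z ⊗ₜ[ℂ] (1 : A)) := by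
  induction z using TensorProduct.induction_on with
  | zero => simp [TensorProduct.zero_tmul]
  | tmul x y => simp [a12, Algebra.TensorProduct.assoc_tmul]
  | add x y hx hy => rw [map_add, TensorProduct.add_tmul, map_add, hx, hy]

set_option maxHeartbeats 800000 in
/-- fusion relation for the chiral monodromy `M = (v⁻¹ ⊗ 1) · R · τ(R)`:
`M₂₃ · R₁₂ · M₁₃ = τ(R)₁₂⁻¹ · (Δ ⊗ id)(M)` in `A ⊗ A ⊗ A`. -/
theorem monodromy_fusion (R : (A ⊗[ℂ] A)ˣ)
    (hR : ∀ a : A, (R : A ⊗[ℂ] A) * Bialgebra.comulAlgHom ℂ A a =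
      Algebra.TensorProduct.comm ℂ A A (Bialgebra.comulAlgHom ℂ A a) * R)
    (hR1 : deltaIdA A (R : A ⊗[ℂ] A) = a13 A (R : A ⊗[ℂ] A) * a23 A (R : A ⊗[ℂ] A))
    (hR2 : idDeltaA A (R : A ⊗[ℂ] A) = a13 A (R : A ⊗[ℂ] A) * a12 A (R : A ⊗[ℂ] A))
    (v : Aˣ) (hvCentral : ∀ a : A, (v : A) * a = a * v)
    (hRibbon : Algebra.TensorProduct.comm ℂ A A (R : A ⊗[ℂ] A) * R =
      ((v : A) ⊗ₜ[ℂ] (v : A)) *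
        ((uMap (Bialgebra.comulAlgHom ℂ A) v)⁻¹ : (A ⊗[ℂ] A)ˣ)) :
    a23 A (((v⁻¹ : Aˣ) : A) ⊗ₜ[ℂ] (1 : A) *
          ((R : A ⊗[ℂ] A) * Algebra.TensorProduct.comm ℂ A A (R : A ⊗[ℂ] A))) *
        a12 A (R : A ⊗[ℂ] A) *
        a13 A (((v⁻¹ : Aˣ) : A) ⊗ₜ[ℂ] (1 : A) *
          ((R : A ⊗[ℂ] A) * Algebra.TensorProduct.comm ℂ A A (R : A ⊗[ℂ] A))) =
      ((uMap (AlgHom.comp (a12 A) (Algebra.TensorProduct.comm ℂ A A).toAlgHom) R)⁻¹ :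
          (A ⊗[ℂ] (A ⊗[ℂ] A))ˣ) *
        deltaIdA A (((v⁻¹ : Aˣ) : A) ⊗ₜ[ℂ] (1 : A) *
          ((R : A ⊗[ℂ] A) * Algebra.TensorProduct.comm ℂ A A (R : A ⊗[ℂ] A))) := by
  set D : A →ₐ[ℂ] A ⊗[ℂ] A := Bialgebra.comulAlgHom ℂ A with hD
  set r : A ⊗[ℂ] A := (R : A ⊗[ℂ] A) with hrdef
  set r' : A ⊗[ℂ] A := Algebra.TensorProduct.comm ℂ A A (R : A ⊗[ℂ] A) with hr'def
  set w : A := ((v⁻¹ : Aˣ) : A) with hwdef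
  -- centrality of w
  have hwc : ∀ a : A, w * a = a * w := fun a => (Commute.units_inv_left (hvCentral a))
  set c1 : A ⊗[ℂ] (A ⊗[ℂ] A) := w ⊗ₜ[ℂ] (1 : A ⊗[ℂ] A) with hc1def
  set c2 : A ⊗[ℂ] (A ⊗[ℂ] A) := (1 : A) ⊗ₜ[ℂ] (w ⊗ₜ[ℂ] (1 : A)) with hc2def
  have hwc2 : ∀ z : A ⊗[ℂ] A, (w ⊗ₜ[ℂ] (1 : A)) * z = z * (w ⊗ₜ[ℂ] (1 : A)) := cen_left hwc
  have hc1 : ∀ z, c1 * z = z * c1 := cen_left hwc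
  have hc2 : ∀ z, c2 * z = z * c2 := cen_right hwc2
  have sw1 : ∀ x z : A ⊗[ℂ] (A ⊗[ℂ] A), x * (c1 * z) = c1 * (x * z) := fun x z => by
    rw [← mul_assoc, ← hc1, mul_assoc]
  have sw1' : ∀ x : A ⊗[ℂ] (A ⊗[ℂ] A), x * c1 = c1 * x := fun x => (hc1 x).symm
  have sw2 : ∀ x z : A ⊗[ℂ] (A ⊗[ℂ] A), x * (c2 * z) = c2 * (x * z) := fun x z => by
    rw [← mul_assoc, ← hc2, mul_assoc]
  have sw2' : ∀ x : A ⊗[ℂ] (A ⊗[ℂ] A), x * c2 = c2 * x := fun x => (hc2 x).symm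
  -- flip is involutive
  have htt : ∀ x : A ⊗[ℂ] A,
      Algebra.TensorProduct.comm ℂ A A (Algebra.TensorProduct.comm ℂ A A x) = x := by
    intro x
    induction x using TensorProduct.induction_on with
    | zero => simp
    | tmul a b => simp
    | add x y hx hy => simp [map_add, hx, hy]
  -- opposite comultiplication
  set opD : A →ₐ[ℂ] A ⊗[ℂ] A :=
    ((Algebra.TensorProduct.comm ℂ A A).toAlgHom.comp D) with hopD
  have hopDa : ∀ a : A, opD a = Algebra.TensorProduct.comm ℂ A A (D a) := fun a => rfl
  -- intertwining for r'
  have hτR : ∀ a : A, r' * opD a = D a * r' := by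
    intro a
    have h := congrArg (Algebra.TensorProduct.comm ℂ A A) (hR a)
    rw [map_mul, map_mul, htt] at h
    rw [hopDa]
    exact h
  -- monodromy commutes with opD
  have hN : ∀ a : A, (r * r') * opD a = opD a * (r * r') := by
    intro a
    calc (r * r') * opD a = r * (r' * opD a) := mul_assoc _ _ _
      _ = r * (D a * r') := by rw [hτR]
      _ = (r * D a) * r' := (mul_assoc _ _ _).symm
      _ = (Algebra.TensorProduct.comm ℂ A A (D a) * r) * r' := by rw [hR a]
      _ = opD a * (r * r') := by rw [mul_assoc, hopDa]
  -- ψ = id ⊗ τ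
  set ψ : A ⊗[ℂ] (A ⊗[ℂ] A) →ₐ[ℂ] A ⊗[ℂ] (A ⊗[ℂ] A) :=
    Algebra.TensorProduct.map (AlgHom.id ℂ A) (Algebra.TensorProduct.comm ℂ A A).toAlgHom
    with hψdef
  have hψ13 : ∀ z : A ⊗[ℂ] A, ψ (a13 A z) = a12 A z := by
    intro z
    induction z using TensorProduct.induction_on with
    | zero => simp
    | tmul x y => simp [a13, a12, hψdef]
    | add x y hx hy => rw [map_add, map_add, hx, hy, map_add]
  have hψ12 : ∀ z : A ⊗[ℂ] A, ψ (a12 A z) = a13 A z := by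
    intro z
    induction z using TensorProduct.induction_on with
    | zero => simp
    | tmul x y => simp [a13, a12, hψdef]
    | add x y hx hy => rw [map_add, map_add, hx, hy, map_add]
  have hψD : ∀ z : A ⊗[ℂ] A,
      ψ (idDeltaA A z) = Algebra.TensorProduct.map (AlgHom.id ℂ A) opD z := by
    intro z
    induction z using TensorProduct.induction_on with
    | zero => simp
    | tmul x y => simp [idDeltaA, hψdef, hopD, hD]
    | add x y hx hy => rw [map_add, map_add, hx, hy, map_add]
  have h3 : a12 A r * a13 A r = Algebra.TensorProduct.map (AlgHom.id ℂ A) opD r := by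
    have h := congrArg ψ hR2
    rw [map_mul, hψ13, hψ12, hψD] at h
    exact h.symm
  -- key commutation
  have ha23N : a23 A (r * r') = (1 : A) ⊗ₜ[ℂ] (r * r') := by
    simp [a23]
  have hK : (a23 A r * a23 A r') * (a12 A r * a13 A r)
      = (a12 A r * a13 A r) * (a23 A r * a23 A r') := by
    rw [← map_mul, h3, ha23N]
    exact mono_comm (r * r') opD hN r
  have hKgen : ∀ z : A ⊗[ℂ] (A ⊗[ℂ] A),
      a23 A r * (a23 A r' * (a12 A r * (a13 A r * z)))
        = a12 A r * (a13 A r * (a23 A r * (a23 A r' * z))) := by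
    intro z
    calc a23 A r * (a23 A r' * (a12 A r * (a13 A r * z)))
        = ((a23 A r * a23 A r') * (a12 A r * a13 A r)) * z := by
          simp only [mul_assoc]
      _ = ((a12 A r * a13 A r) * (a23 A r * a23 A r')) * z := by rw [hK]
      _ = a12 A r * (a13 A r * (a23 A r * (a23 A r' * z))) := by
          simp only [mul_assoc]
  -- φ = cyclic permutation a ⊗ b ⊗ c ↦ b ⊗ c ⊗ a
  set φ : A ⊗[ℂ] (A ⊗[ℂ] A) →ₐ[ℂ] A ⊗[ℂ] (A ⊗[ℂ] A) :=
    (Algebra.TensorProduct.assoc ℂ ℂ ℂ A A A).toAlgHom.comp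
      (Algebra.TensorProduct.comm ℂ A (A ⊗[ℂ] A)).toAlgHom with hφdef
  have hφ13 : ∀ z : A ⊗[ℂ] A, φ (a13 A z) = a23 A (Algebra.TensorProduct.comm ℂ A A z) := by
    intro z
    induction z using TensorProduct.induction_on with
    | zero => simp
    | tmul x y => simp [a13, a23, hφdef, Algebra.TensorProduct.assoc_tmul]
    | add x y hx hy => rw [map_add, map_add, hx, hy, map_add, map_add]
  have hφ12 : ∀ z : A ⊗[ℂ] A, φ (a12 A z) = a13 A (Algebra.TensorProduct.comm ℂ A A z) := by
    intro z
    induction z using TensorProduct.induction_on with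
    | zero => simp
    | tmul x y => simp [a12, a13, hφdef, Algebra.TensorProduct.assoc_tmul]
    | add x y hx hy => rw [map_add, map_add, hx, hy, map_add, map_add]
  have hφD : ∀ z : A ⊗[ℂ] A,
      φ (idDeltaA A z) = deltaIdA A (Algebra.TensorProduct.comm ℂ A A z) := by
    intro z
    induction z using TensorProduct.induction_on with
    | zero => simp
    | tmul x y =>
      have haux : ∀ (p : A ⊗[ℂ] A) (x : A),
          φ (x ⊗ₜ[ℂ] p) = Algebra.TensorProduct.assoc ℂ ℂ ℂ A A A (p ⊗ₜ[ℂ] x) := by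
        intro p x; simp [hφdef]
      simp only [idDeltaA, deltaIdA, Algebra.TensorProduct.map_tmul, AlgHom.id_apply,
        Algebra.TensorProduct.comm_tmul, AlgHom.comp_apply, AlgEquiv.toAlgHom_eq_coe,
        AlgHom.coe_coe]
      exact haux (D y) x
    | add x y hx hy => rw [map_add, map_add, hx, hy, map_add, map_add]
  have h2' : deltaIdA A r' = a23 A r' * a13 A r' := by
    have h := congrArg φ hR2
    rw [map_mul, hφ13, hφ12, hφD] at h
    exact h
  -- ribbon: D w = (w ⊗ w) * (r' * r)
  have hDw : D w = (w ⊗ₜ[ℂ] w) * (r' * r) := by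
    have h1 : D w = ((uMap D v)⁻¹ : (A ⊗[ℂ] A)ˣ) := by
      rw [← map_inv (uMap D) v]
      simp [uMap, hwdef]
    rw [h1, hRibbon, ← mul_assoc, Algebra.TensorProduct.tmul_mul_tmul]
    rw [hwdef, Units.inv_mul]
    rw [show ((1 : A) ⊗ₜ[ℂ] (1 : A)) = (1 : A ⊗[ℂ] A) from rfl, one_mul]
  -- expansions
  have e23 : a23 A (w ⊗ₜ[ℂ] (1 : A) * (r * r')) = c2 * (a23 A r * a23 A r') := by
    rw [map_mul, map_mul]
    congr 1
  have e13 : a13 A (w ⊗ₜ[ℂ] (1 : A) * (r * r')) = c1 * (a13 A r * a13 A r') := by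
    rw [map_mul, map_mul]
    congr 1
  have eDw : deltaIdA A (w ⊗ₜ[ℂ] (1 : A)) = (c1 * c2) * (a12 A r' * a12 A r) := by
    have h0 : deltaIdA A (w ⊗ₜ[ℂ] (1 : A)) = a12 A (D w) := by
      rw [a12_eq]
      simp [deltaIdA, hD]
    rw [h0, hDw, map_mul, map_mul]
    congr 1
    · simp [a12, hc1def, hc2def, Algebra.TensorProduct.tmul_mul_tmul]
  have eD : deltaIdA A (w ⊗ₜ[ℂ] (1 : A) * (r * r'))
      = (c1 * c2) * ((a12 A r' * a12 A r) *
          ((a13 A r * a23 A r) * (a23 A r' * a13 A r'))) := by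
    rw [map_mul, map_mul, eDw, hR1, h2', mul_assoc]
  -- U-cancellation
  have hU : ((uMap (AlgHom.comp (a12 A) (Algebra.TensorProduct.comm ℂ A A).toAlgHom) R)⁻¹ :
        (A ⊗[ℂ] (A ⊗[ℂ] A))ˣ) * a12 A r' = 1 := by
    have h1 : a12 A r' =
        ((uMap (AlgHom.comp (a12 A) (Algebra.TensorProduct.comm ℂ A A).toAlgHom) R :
          (A ⊗[ℂ] (A ⊗[ℂ] A))ˣ) : A ⊗[ℂ] (A ⊗[ℂ] A)) := by
      simp [uMap, hr'def]
    rw [h1, Units.inv_mul]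
  have hUgen : ∀ z : A ⊗[ℂ] (A ⊗[ℂ] A),
      ((uMap (AlgHom.comp (a12 A) (Algebra.TensorProduct.comm ℂ A A).toAlgHom) R)⁻¹ :
        (A ⊗[ℂ] (A ⊗[ℂ] A))ˣ) * (a12 A r' * z) = z := fun z => by
    rw [← mul_assoc, hU, one_mul]
  -- final assembly
  rw [e23, e13, eD]
  simp only [mul_assoc]
  simp only [sw1, sw1']
  simp only [sw2, sw2']
  simp only [hUgen]
  rw [hKgen (a13 A r')]

end Stmt9
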